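/- Let ρ be a density operator and σ a positive definite density operator on a finite-dimensional complex Hilbert space, let α > 1 and α' = α/(α−1). Define T := σ^{−1/(2α')} | σ^{−1/(2α')} ρ σ^{−1/(2α')} |^{α−1} σ^{−1/(2α')}. Then T is positive semidefinite, Tr[ρT] > 0, and α' log Tr[ρT] − log Tr[(σ^{1/(2α')} T σ^{1/(2α')})^{α'}] = D_α^*(ρ‖σ); i.e., this T attains the supremum in the variational expression of the sandwiched Rényi divergence. -/

import Mathlib

open Matrix
open scoped ComplexOrder Kronecker

noncomputable section

/-- Real power of a Hermitian matrix via functional calculus on its support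
(Moore–Penrose convention, also for negative powers); junk value `0` for
non-Hermitian input. -/
def Matrix.rpowH {ι : Type*} [Fintype ι] [DecidableEq ι] (A : Matrix ι ι ℂ) (p : ℝ) :
    Matrix ι ι ℂ :=
  if hA : A.IsHermitian then
    (hA.eigenvectorUnitary : Matrix ι ι ℂ) *
      Matrix.diagonal (fun i => ((hA.eigenvalues i ^ p : ℝ) : ℂ)) *
      star (hA.eigenvectorUnitary : Matrix ι ι ℂ)
  else 0

/-- The operator absolute value `|A| = (A† A)^(1/2)`. -/
def Matrix.absM {ι : Type*} [Fintype ι] [DecidableEq ι] (A : Matrix ι ι ℂ) :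
    Matrix ι ι ℂ :=
  Matrix.rpowH (Aᴴ * A) (2⁻¹ : ℝ)

/-- Real part of the trace. -/
def retr {ι : Type*} [Fintype ι] (A : Matrix ι ι ℂ) : ℝ :=
  (Matrix.trace A).re


/-- Sandwiched Rényi divergence
`D_α^*(ρ‖σ) = (α-1)⁻¹ log Tr[(σ^{(1-α)/(2α)} ρ σ^{(1-α)/(2α)})^α]`. -/
def sandwichedRenyiDiv {ι : Type*} [Fintype ι] [DecidableEq ι]
    (α : ℝ) (ρ σ : Matrix ι ι ℂ) : ℝ :=
  (α - 1)⁻¹ * Real.log (retr (Matrix.rpowH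
    (Matrix.rpowH σ ((1 - α) / (2 * α)) * ρ * Matrix.rpowH σ ((1 - α) / (2 * α))) α))

/-!
Put `X := σ^{-1/(2α')} ρ σ^{-1/(2α')}`. Since `X ≥ 0` we have `|X| = X`, so
`T = σ^{-1/(2α')} X^{α-1} σ^{-1/(2α')}` is a congruence of a positive matrix. Cyclicity of the
trace gives `Tr[ρT] = Tr[X^α]`, while `σ^{1/(2α')} T σ^{1/(2α')} = X^{α-1}` has `α'`-th power
`X^α` because `(α-1)α' = α`. Both traces are therefore `Tr[X^α] > 0` (`X ≠ 0` as `Tr ρ = 1`),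
and the objective is `(α'-1) log Tr[X^α] = D_α^*(ρ‖σ)`, since `α'-1 = 1/(α-1)` and
`-1/(2α') = (1-α)/(2α)`.
-/

open scoped MatrixOrder

namespace Matrix

variable {ι : Type*} [Fintype ι] [DecidableEq ι] {A : Matrix ι ι ℂ}

lemma IsHermitian.rpowH_eq_cfc (hA : A.IsHermitian) (p : ℝ) :
    A.rpowH p = cfc (fun x : ℝ => x ^ p) A := by
  rw [rpowH, dif_pos hA, hA.cfc_eq, IsHermitian.cfc]
  rfl

lemma isHermitian_rpowH (A : Matrix ι ι ℂ) (p : ℝ) : (A.rpowH p).IsHermitian := by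
  by_cases hA : A.IsHermitian
  · rw [hA.rpowH_eq_cfc]
    exact cfc_predicate _ A
  · rw [rpowH, dif_neg hA]
    exact isHermitian_zero

lemma IsHermitian.retr_cfc (hA : A.IsHermitian) (f : ℝ → ℝ) :
    retr (cfc f A) = ∑ i, f (hA.eigenvalues i) := by
  rw [hA.cfc_eq, IsHermitian.cfc, Unitary.conjStarAlgAut_apply, retr, trace_mul_cycle,
    Unitary.star_mul_self_of_mem (SetLike.coe_mem hA.eigenvectorUnitary), one_mul,
    trace_diagonal]
  simp [Complex.re_sum]

lemma IsHermitian.rpowH_zero (hA : A.IsHermitian) : A.rpowH 0 = 1 := by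
  simp only [hA.rpowH_eq_cfc, Real.rpow_zero]
  exact cfc_const_one ℝ A

lemma IsHermitian.rpowH_one (hA : A.IsHermitian) : A.rpowH 1 = A := by
  simp only [hA.rpowH_eq_cfc, Real.rpow_one]
  exact cfc_id' ℝ A

lemma PosSemidef.rpowH_mul_rpowH (hA : A.PosSemidef) {p q : ℝ} (hpq : p + q ≠ 0) :
    A.rpowH p * A.rpowH q = A.rpowH (p + q) := by
  have hfin := A.finite_real_spectrum
  simp only [hA.isHermitian.rpowH_eq_cfc]
  rw [← cfc_mul _ _ A (hfin.continuousOn _) (hfin.continuousOn _)]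
  exact cfc_congr fun x hx =>
    (Real.rpow_add' (spectrum_nonneg_of_nonneg hA.nonneg hx) hpq).symm

lemma PosDef.rpowH_mul_rpowH (hA : A.PosDef) (p q : ℝ) :
    A.rpowH p * A.rpowH q = A.rpowH (p + q) := by
  have hfin := A.finite_real_spectrum
  simp only [hA.isHermitian.rpowH_eq_cfc]
  rw [← cfc_mul _ _ A (hfin.continuousOn _) (hfin.continuousOn _)]
  refine cfc_congr fun x hx => (Real.rpow_add ?_ p q).symm
  obtain ⟨i, rfl⟩ := hA.isHermitian.spectrum_real_eq_range_eigenvalues ▸ hx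
  exact hA.eigenvalues_pos i

lemma PosDef.rpowH_sandwich_rpowH_neg (hA : A.PosDef) (p : ℝ) (M : Matrix ι ι ℂ) :
    A.rpowH p * (A.rpowH (-p) * M * A.rpowH (-p)) * A.rpowH p = M := by
  have hcancel : A.rpowH p * A.rpowH (-p) = 1 := by
    rw [hA.rpowH_mul_rpowH, add_neg_cancel, hA.isHermitian.rpowH_zero]
  have hcancel' : A.rpowH (-p) * A.rpowH p = 1 := by
    rw [hA.rpowH_mul_rpowH, neg_add_cancel, hA.isHermitian.rpowH_zero]
  simp only [← Matrix.mul_assoc, hcancel, Matrix.one_mul]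
  rw [Matrix.mul_assoc, hcancel', Matrix.mul_one]

lemma PosSemidef.rpowH_rpowH (hA : A.PosSemidef) (p q : ℝ) :
    (A.rpowH p).rpowH q = A.rpowH (p * q) := by
  have hfin := A.finite_real_spectrum
  rw [(A.isHermitian_rpowH p).rpowH_eq_cfc, hA.isHermitian.rpowH_eq_cfc,
    hA.isHermitian.rpowH_eq_cfc, ← cfc_comp' (fun x : ℝ => x ^ q) (fun x : ℝ => x ^ p) A
      ((hfin.image _).continuousOn _) (hfin.continuousOn _) hA.isHermitian.isSelfAdjoint]
  exact cfc_congr fun x hx => (Real.rpow_mul (spectrum_nonneg_of_nonneg hA.nonneg hx) p q).symm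

lemma PosSemidef.posSemidef_rpowH (hA : A.PosSemidef) (p : ℝ) : (A.rpowH p).PosSemidef := by
  rw [hA.isHermitian.rpowH_eq_cfc]
  exact (cfc_nonneg fun x hx =>
    Real.rpow_nonneg (spectrum_nonneg_of_nonneg hA.nonneg hx) p).posSemidef

lemma PosSemidef.absM_eq_self (hA : A.PosSemidef) : A.absM = A := by
  have hsq : Aᴴ * A = A.rpowH 2 := calc
    Aᴴ * A = A.rpowH 1 * A.rpowH 1 := by rw [hA.isHermitian.eq, hA.isHermitian.rpowH_one]
    _ = A.rpowH 2 := by rw [hA.rpowH_mul_rpowH (by norm_num), one_add_one_eq_two]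
  rw [absM, hsq, hA.rpowH_rpowH, mul_inv_cancel₀ two_ne_zero, hA.isHermitian.rpowH_one]

lemma PosSemidef.retr_rpowH_pos (hA : A.PosSemidef) (hA0 : A ≠ 0) (p : ℝ) :
    0 < retr (A.rpowH p) := by
  obtain ⟨i, hi⟩ : ∃ i, hA.isHermitian.eigenvalues i ≠ 0 := by
    by_contra! h
    exact hA0 (hA.isHermitian.eigenvalues_eq_zero_iff.mp (funext h))
  rw [hA.isHermitian.rpowH_eq_cfc, hA.isHermitian.retr_cfc]
  refine Finset.sum_pos' (fun j _ => Real.rpow_nonneg (hA.eigenvalues_nonneg j) p)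
    ⟨i, Finset.mem_univ i, Real.rpow_pos_of_pos ((hA.eigenvalues_nonneg i).lt_of_ne' hi) p⟩

end Matrix

theorem sandwiched_variational_optimizer_general
    {ι : Type*} [Fintype ι] [DecidableEq ι]
    (ρ σ : Matrix ι ι ℂ)
    (hρ : ρ.PosSemidef) (hρtr : ρ.trace = 1)
    (hσ : σ.PosDef)
    (α : ℝ) (hα : 1 < α) (α' : ℝ) (hα' : α' = α / (α - 1))
    (T : Matrix ι ι ℂ)
    (hT : T = Matrix.rpowH σ (-(1 / (2 * α'))) *
        Matrix.rpowH (Matrix.absM (Matrix.rpowH σ (-(1 / (2 * α'))) * ρ *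
          Matrix.rpowH σ (-(1 / (2 * α'))))) (α - 1) *
        Matrix.rpowH σ (-(1 / (2 * α')))) :
    T.PosSemidef ∧ 0 < retr (ρ * T) ∧
      α' * Real.log (retr (ρ * T)) -
        Real.log (retr (Matrix.rpowH
          (Matrix.rpowH σ (1 / (2 * α')) * T * Matrix.rpowH σ (1 / (2 * α'))) α')) =
      sandwichedRenyiDiv α ρ σ := by
  have hα1 : α - 1 ≠ 0 := sub_ne_zero.mpr hα.ne'
  set s := 1 / (2 * α') with hs
  set X := σ.rpowH (-s) * ρ * σ.rpowH (-s) with hXdef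
  have hX : X.PosSemidef := by
    simpa only [(σ.isHermitian_rpowH (-s)).eq] using hρ.mul_mul_conjTranspose_same (σ.rpowH (-s))
  have hX0 : X ≠ 0 := by
    rintro hX0
    have hρ0 : ρ = 0 := by
      rw [← hσ.rpowH_sandwich_rpowH_neg s ρ, ← hXdef, hX0, mul_zero, zero_mul]
    simp [hρ0] at hρtr
  rw [hX.absM_eq_self] at hT
  have htr : retr (ρ * T) = retr (X.rpowH α) := calc
    retr (ρ * T) = retr (X * X.rpowH (α - 1)) := by
      rw [hT, retr, retr, ← Matrix.mul_assoc, trace_mul_comm]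
      simp only [X, Matrix.mul_assoc]
    _ = retr (X.rpowH α) := by
      nth_rw 1 [← hX.isHermitian.rpowH_one]
      rw [hX.rpowH_mul_rpowH (by linarith), add_sub_cancel]
  have hσTσ : σ.rpowH s * T * σ.rpowH s = X.rpowH (α - 1) := by
    rw [hT, hσ.rpowH_sandwich_rpowH_neg]
  have hD : sandwichedRenyiDiv α ρ σ = (α - 1)⁻¹ * Real.log (retr (X.rpowH α)) := by
    rw [sandwichedRenyiDiv, show (1 - α) / (2 * α) = -s by rw [hs, hα']; field_simp; ring]
  refine ⟨?_, htr ▸ hX.retr_rpowH_pos hX0 α, ?_⟩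
  · simpa only [← hT, (σ.isHermitian_rpowH (-s)).eq] using
      (hX.posSemidef_rpowH (α - 1)).mul_mul_conjTranspose_same (σ.rpowH (-s))
  · rw [htr, hσTσ, hX.rpowH_rpowH, show (α - 1) * α' = α by rw [hα']; field_simp, hD,
      show α' = 1 + (α - 1)⁻¹ by rw [hα']; field_simp; ring]
    ring

/-- the optimizer of the sandwiched variational expression.
For a density operator `ρ`, a positive definite density operator `σ` and `α > 1`
with `α' = α/(α-1)`, the test
`T = σ^{-1/(2α')} |σ^{-1/(2α')} ρ σ^{-1/(2α')}|^{α-1} σ^{-1/(2α')}`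
is positive semidefinite, satisfies `Tr[ρT] > 0`, and attains
`α' log Tr[ρT] - log Tr[(σ^{1/(2α')} T σ^{1/(2α')})^{α'}] = D_α^*(ρ‖σ)`. -/
theorem sandwiched_variational_optimizer
    {ι : Type*} [Fintype ι] [DecidableEq ι]
    (ρ σ : Matrix ι ι ℂ)
    (hρ : ρ.PosSemidef) (hρtr : ρ.trace = 1)
    (hσ : σ.PosDef) (hσtr : σ.trace = 1)
    (α : ℝ) (hα : 1 < α) (α' : ℝ) (hα' : α' = α / (α - 1))
    (T : Matrix ι ι ℂ)
    (hT : T = Matrix.rpowH σ (-(1 / (2 * α'))) *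
        Matrix.rpowH (Matrix.absM (Matrix.rpowH σ (-(1 / (2 * α'))) * ρ *
          Matrix.rpowH σ (-(1 / (2 * α'))))) (α - 1) *
        Matrix.rpowH σ (-(1 / (2 * α')))) :
    T.PosSemidef ∧ 0 < retr (ρ * T) ∧
      α' * Real.log (retr (ρ * T)) -
        Real.log (retr (Matrix.rpowH
          (Matrix.rpowH σ (1 / (2 * α')) * T * Matrix.rpowH σ (1 / (2 * α'))) α')) =
      sandwichedRenyiDiv α ρ σ :=
  sandwiched_variational_optimizer_general ρ σ hρ hρtr hσ α hα α' hα' T hT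

end
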